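/- Let s ∈ Σ be a cluster with |s| ≥ 2 such that either s has no chromatic children, or all chromatic children of s are coloured red, or all chromatic children of s are coloured blue. Then the chromatic children of s are exactly the children of s of odd cardinality. -/
import Mathlib


/-- Colours of roots and clusters. -/
inductive Colour : Type
  | red | blue | purple | black
deriving DecidableEq

/-- A cluster picture on a finite set `R`: a collection of nonempty subsets of `R`
containing `R` and all singletons, any two of which are nested or disjoint. -/
def IsClusterPicture {α : Type*} [DecidableEq α] (R : Finset α) (CP : Set (Finset α)) : Prop :=
  (∀ s ∈ CP, s.Nonempty ∧ s ⊆ R) ∧ R ∈ CP ∧ (∀ r ∈ R, ({r} : Finset α) ∈ CP) ∧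
    ∀ s ∈ CP, ∀ t ∈ CP, s ⊆ t ∨ t ⊆ s ∨ s ∩ t = ∅

/-- `t` is a child of `s`: a maximal cluster properly contained in `s`. -/
def IsChildOf {α : Type*} [DecidableEq α] (CP : Set (Finset α)) (t s : Finset α) : Prop :=
  t ∈ CP ∧ t ⊂ s ∧ ∀ u ∈ CP, u ⊂ s → t ⊆ u → u = t

/-- The number of children of `s` coloured red or purple. -/
noncomputable def aCount {α : Type*} [DecidableEq α] (CP : Set (Finset α)) (col : Finset α → Colour)
    (s : Finset α) : ℕ :=
  Set.ncard {t : Finset α | IsChildOf CP t s ∧ (col t = Colour.red ∨ col t = Colour.purple)}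

/-- The number of children of `s` coloured blue or purple. -/
noncomputable def bCount {α : Type*} [DecidableEq α] (CP : Set (Finset α)) (col : Finset α → Colour)
    (s : Finset α) : ℕ :=
  Set.ncard {t : Finset α | IsChildOf CP t s ∧ (col t = Colour.blue ∨ col t = Colour.purple)}

/-- `col` is the recursive colouring of the clusters of the cluster picture `CP`
induced by the colouring `c` of the roots. -/
def IsColouring {α : Type*} [DecidableEq α] (R : Finset α) (CP : Set (Finset α))
    (c : α → Colour) (col : Finset α → Colour) : Prop :=
  (∀ r ∈ R, col {r} = c r) ∧
    ∀ s ∈ CP, 2 ≤ s.card →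
      ((Odd (aCount CP col s) ∧ Even (bCount CP col s)) → col s = Colour.red) ∧
      ((Odd (bCount CP col s) ∧ Even (aCount CP col s)) → col s = Colour.blue) ∧
      ((Odd (aCount CP col s) ∧ Odd (bCount CP col s)) → col s = Colour.purple) ∧
      ((Even (aCount CP col s) ∧ Even (bCount CP col s)) → col s = Colour.black)

/-- A cluster is chromatic if it is red, blue or purple. -/
def Chromatic {β : Type*} (col : β → Colour) (t : β) : Prop :=
  col t = Colour.red ∨ col t = Colour.blue ∨ col t = Colour.purple

section Aux

open Classical

variable {α : Type*} [DecidableEq α]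

/-- The finset of children of `s`. -/
noncomputable def childrenFS (CP : Set (Finset α)) (s : Finset α) : Finset (Finset α) :=
  s.powerset.filter (fun t => IsChildOf CP t s)

lemma mem_childrenFS {CP : Set (Finset α)} {s t : Finset α} :
    t ∈ childrenFS CP s ↔ IsChildOf CP t s := by
  constructor
  · intro h; exact (Finset.mem_filter.mp h).2
  · intro h
    exact Finset.mem_filter.mpr ⟨Finset.mem_powerset.mpr h.2.1.1, h⟩

lemma exists_child {R : Finset α} {CP : Set (Finset α)} (hCP : IsClusterPicture R CP)
    {s : Finset α} (hs : s ∈ CP) (hcard : 2 ≤ s.card) {x : α} (hx : x ∈ s) :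
    ∃ t, IsChildOf CP t s ∧ x ∈ t := by
  obtain ⟨hne, hRmem, hsingle, hnest⟩ := hCP
  set T := s.powerset.filter (fun u => u ∈ CP ∧ x ∈ u ∧ u ⊂ s) with hT
  have hxS : ({x} : Finset α) ∈ T := by
    refine Finset.mem_filter.mpr ⟨Finset.mem_powerset.mpr (Finset.singleton_subset_iff.mpr hx),
      hsingle x ((hne s hs).2 hx), Finset.mem_singleton_self x, ?_⟩
    refine (Finset.ssubset_iff_of_subset (Finset.singleton_subset_iff.mpr hx)).mpr ?_
    obtain ⟨y, hy, hyx⟩ := Finset.exists_mem_ne hcard x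
    exact ⟨y, hy, by simpa using hyx⟩
  obtain ⟨u, huT, hmax⟩ := Finset.exists_max_image T Finset.card ⟨_, hxS⟩
  have hu := Finset.mem_filter.mp huT
  obtain ⟨huCP, hxu, husps⟩ := hu.2
  refine ⟨u, ⟨huCP, husps, ?_⟩, hxu⟩
  intro v hv hvs huv
  have hvT : v ∈ T := Finset.mem_filter.mpr
    ⟨Finset.mem_powerset.mpr hvs.subset, hv, huv hxu, hvs⟩
  exact (Finset.eq_of_subset_of_card_le huv (hmax v hvT)).symm

lemma children_disjoint {R : Finset α} {CP : Set (Finset α)} (hCP : IsClusterPicture R CP)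
    {s t₁ t₂ : Finset α} (h1 : IsChildOf CP t₁ s) (h2 : IsChildOf CP t₂ s) (hne : t₁ ≠ t₂) :
    Disjoint t₁ t₂ := by
  rcases hCP.2.2.2 t₁ h1.1 t₂ h2.1 with h | h | h
  · exact absurd ((h1.2.2 t₂ h2.1 h2.2.1 h).symm) hne
  · exact absurd (h2.2.2 t₁ h1.1 h1.2.1 h) hne
  · exact Finset.disjoint_iff_inter_eq_empty.mpr h

lemma children_biUnion {R : Finset α} {CP : Set (Finset α)} (hCP : IsClusterPicture R CP)
    {s : Finset α} (hs : s ∈ CP) (hcard : 2 ≤ s.card) :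
    (childrenFS CP s).biUnion id = s := by
  ext x
  simp only [Finset.mem_biUnion, id]
  constructor
  · rintro ⟨t, ht, hxt⟩
    exact (mem_childrenFS.mp ht).2.1.1 hxt
  · intro hx
    obtain ⟨t, ht, hxt⟩ := exists_child hCP hs hcard hx
    exact ⟨t, mem_childrenFS.mpr ht, hxt⟩

lemma card_eq_sum_children {R : Finset α} {CP : Set (Finset α)} (hCP : IsClusterPicture R CP)
    {s : Finset α} (hs : s ∈ CP) (hcard : 2 ≤ s.card) :
    s.card = ∑ u ∈ childrenFS CP s, u.card := by
  conv_lhs => rw [← children_biUnion hCP hs hcard]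
  exact Finset.card_biUnion (fun t₁ h1 t₂ h2 hne =>
    children_disjoint hCP (mem_childrenFS.mp h1) (mem_childrenFS.mp h2) hne)

lemma count_eq_filter_card {CP : Set (Finset α)} {s : Finset α}
    (P : Finset α → Prop) [DecidablePred P] :
    Set.ncard {t : Finset α | IsChildOf CP t s ∧ P t}
      = ((childrenFS CP s).filter P).card := by
  rw [← Set.ncard_coe_finset]
  congr 1
  ext t
  simp only [Set.mem_setOf_eq, Finset.coe_filter, mem_childrenFS]

lemma card_filter_or_of_ne {F : Finset (Finset α)} {p q : Finset α → Prop}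
    [DecidablePred p] [DecidablePred q] (h : ∀ u, ¬(p u ∧ q u)) :
    (F.filter fun u => p u ∨ q u).card = (F.filter p).card + (F.filter q).card := by
  rw [Finset.filter_or, Finset.card_union_of_disjoint]
  rw [Finset.disjoint_left]
  intro u hup huq
  exact h u ⟨(Finset.mem_filter.mp hup).2, (Finset.mem_filter.mp huq).2⟩

/-- Key parity lemma: a cluster is red or blue iff its cardinality is odd. -/
lemma odd_iff_redblue {R : Finset α} {CP : Set (Finset α)} {c : α → Colour}
    {col : Finset α → Colour}
    (hCP : IsClusterPicture R CP) (hc : ∀ r ∈ R, c r = Colour.red ∨ c r = Colour.blue)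
    (hcol : IsColouring R CP c col) :
    ∀ t ∈ CP, (Odd t.card ↔ (col t = Colour.red ∨ col t = Colour.blue)) := by
  suffices H : ∀ n, ∀ t ∈ CP, t.card = n →
      (Odd t.card ↔ (col t = Colour.red ∨ col t = Colour.blue)) by
    intro t ht; exact H t.card t ht rfl
  intro n
  induction n using Nat.strong_induction_on with
  | _ n ih =>
  intro t ht hn
  rcases Nat.lt_or_ge n 2 with hlt | hge
  · -- n = 0 or 1
    have hpos : 0 < t.card := Finset.card_pos.mpr (hCP.1 t ht).1
    have h1 : t.card = 1 := by omega
    obtain ⟨r, hr⟩ := Finset.card_eq_one.mp h1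
    have hrR : r ∈ R := (hCP.1 t ht).2 (hr ▸ Finset.mem_singleton_self r)
    have hcr : col t = c r := hr ▸ hcol.1 r hrR
    rw [h1, hcr]
    simpa using hc r hrR
  · -- n ≥ 2
    have hcard2 : 2 ≤ t.card := hn ▸ hge
    set F := childrenFS CP t with hF
    have hsum : t.card = ∑ u ∈ F, u.card := card_eq_sum_children hCP ht hcard2
    -- inductive hypothesis for each child
    have ihc : ∀ u ∈ F, (Odd u.card ↔ (col u = Colour.red ∨ col u = Colour.blue)) := by
      intro u hu
      have huc := mem_childrenFS.mp hu
      have hlt : u.card < n := hn ▸ Finset.card_lt_card huc.2.1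
      exact ih u.card hlt u huc.1 rfl
    have hfeq : F.filter (fun u => Odd u.card)
        = F.filter (fun u => col u = Colour.red ∨ col u = Colour.blue) := by
      ext u
      simp only [Finset.mem_filter, and_congr_right_iff]
      intro hu
      exact ihc u hu
    set rc := (F.filter fun u => col u = Colour.red).card with hrc
    set bc := (F.filter fun u => col u = Colour.blue).card with hbc
    set pc := (F.filter fun u => col u = Colour.purple).card with hpc
    have hrb : (F.filter fun u => col u = Colour.red ∨ col u = Colour.blue).card = rc + bc :=
      card_filter_or_of_ne (by rintro u ⟨h1, h2⟩; rw [h1] at h2; exact Colour.noConfusion h2)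
    have hA : aCount CP col t = rc + pc := by
      rw [aCount, count_eq_filter_card]
      exact card_filter_or_of_ne (by rintro u ⟨h1, h2⟩; rw [h1] at h2; exact Colour.noConfusion h2)
    have hB : bCount CP col t = bc + pc := by
      rw [bCount, count_eq_filter_card]
      exact card_filter_or_of_ne (by rintro u ⟨h1, h2⟩; rw [h1] at h2; exact Colour.noConfusion h2)
    have hodd : Odd t.card ↔ Odd (rc + bc) := by
      rw [hsum, Finset.odd_sum_iff_odd_card_odd, hfeq, hrb]
    obtain ⟨hred, hblue, hpurple, hblack⟩ := hcol.2 t ht hcard2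
    rcases Nat.even_or_odd (aCount CP col t) with ha | ha <;>
      rcases Nat.even_or_odd (bCount CP col t) with hb | hb
    · -- both even: black
      have hct := hblack ⟨ha, hb⟩
      rw [hct]
      refine iff_of_false ?_ (by simp)
      rw [hodd, Nat.odd_iff]
      rw [hA, Nat.even_iff] at ha; rw [hB, Nat.even_iff] at hb
      omega
    · -- a even, b odd: blue
      have hct := hblue ⟨hb, ha⟩
      rw [hct]
      refine iff_of_true ?_ (by simp)
      rw [hodd, Nat.odd_iff]
      rw [hA, Nat.even_iff] at ha; rw [hB, Nat.odd_iff] at hb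
      omega
    · -- a odd, b even: red
      have hct := hred ⟨ha, hb⟩
      rw [hct]
      refine iff_of_true ?_ (by simp)
      rw [hodd, Nat.odd_iff]
      rw [hA, Nat.odd_iff] at ha; rw [hB, Nat.even_iff] at hb
      omega
    · -- both odd: purple
      have hct := hpurple ⟨ha, hb⟩
      rw [hct]
      refine iff_of_false ?_ (by simp)
      rw [hodd, Nat.odd_iff]
      rw [hA, Nat.odd_iff] at ha; rw [hB, Nat.odd_iff] at hb
      omega

end Aux

/-- If a cluster has no chromatic children, or all of its chromatic children
are red, or all of its chromatic children are blue, then its chromatic children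
are exactly its odd children. -/
theorem monochromatic_children_iff_odd {α : Type*} [DecidableEq α] (R : Finset α) (hR : R.Nonempty)
    (c : α → Colour) (hc : ∀ r ∈ R, c r = Colour.red ∨ c r = Colour.blue)
    (CP : Set (Finset α)) (hCP : IsClusterPicture R CP)
    (col : Finset α → Colour) (hcol : IsColouring R CP c col)
    (s : Finset α) (hs : s ∈ CP) (hcard : 2 ≤ s.card)
    (hmono : (∀ t, IsChildOf CP t s → ¬ Chromatic col t) ∨
             (∀ t, IsChildOf CP t s → Chromatic col t → col t = Colour.red) ∨
             (∀ t, IsChildOf CP t s → Chromatic col t → col t = Colour.blue)) :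
    ∀ t, IsChildOf CP t s → (Chromatic col t ↔ Odd t.card) := by
  intro t htc
  have hparity := odd_iff_redblue hCP hc hcol t htc.1
  constructor
  · intro hchrom
    rcases hmono with h | h | h
    · exact absurd hchrom (h t htc)
    · exact hparity.mpr (Or.inl (h t htc hchrom))
    · exact hparity.mpr (Or.inr (h t htc hchrom))
  · intro hodd
    rcases hparity.mp hodd with h | h
    · exact Or.inl h
    · exact Or.inr (Or.inl h)
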